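/- For every integer ℓ ≥ 2 and r ≥ 3, and every function p : ℕ → (0,1] satisfying p(n)·n^{r−1} → ∞ as n → ∞, the following holds: for every ε > 0, asymptotically almost surely G_{n,p(n)}^{(r)} contains a C_{2ℓ}^{(r)}-free subgraph with at least (1−ε)·p(n)·C(n−1, r−1) edges. -/

import Mathlib

open MeasureTheory Filter

/-- `E` is the edge set of a linear cycle `C_k^{(r)}`: `k` distinct edges `e_0, …, e_{k-1}`,
each of size `r`, cyclically consecutive edges sharing exactly one vertex, non-consecutive
edges disjoint. -/
def IsLinearCycle {α : Type*} [DecidableEq α] (r k : ℕ) (E : Finset (Finset α)) : Prop :=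
  ∃ e : ℕ → Finset α,
    (∀ i < k, ∀ j < k, e i = e j → i = j) ∧
    E = (Finset.range k).image e ∧
    (∀ i < k, (e i).card = r) ∧
    (∀ i < k, (e i ∩ e ((i + 1) % k)).card = 1) ∧
    (∀ i < k, ∀ j < k, i ≠ j → (i + 1) % k ≠ j → (j + 1) % k ≠ i → Disjoint (e i) (e j))

/-- `G` contains a (not necessarily induced) copy of the linear cycle `C_k^{(r)}`. -/
def ContainsLinearCycle {α : Type*} [DecidableEq α] (r k : ℕ) (G : Finset (Finset α)) : Prop :=
  ∃ E ⊆ G, IsLinearCycle r k E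

open Classical in
/-- The maximum number of edges of a `C_k^{(r)}`-free subgraph of `G`. -/
noncomputable def exCycle {α : Type*} [DecidableEq α] (r k : ℕ) (G : Finset (Finset α)) : ℕ :=
  (G.powerset.filter fun H => ¬ ContainsLinearCycle r k H).sup Finset.card

/-- The Bernoulli measure on `Bool` with parameter `p`. -/
noncomputable def bernoulliMeasure (p : ℝ) : Measure Bool :=
  ENNReal.ofReal p • Measure.dirac true + ENNReal.ofReal (1 - p) • Measure.dirac false

instance (p : ℝ) : IsFiniteMeasure (bernoulliMeasure p) := by
  constructor
  simp [bernoulliMeasure]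

/-- The Erdős–Rényi random `r`-graph `G_{n,p}^{(r)}`, as the product Bernoulli measure
on indicator functions of the `r`-element subsets of `Fin n`. -/
noncomputable def randomHypergraph (n r : ℕ) (p : ℝ) :
    Measure ({s : Finset (Fin n) // s.card = r} → Bool) :=
  Measure.pi fun _ => bernoulliMeasure p

/-- The `r`-graph (set of `r`-element edges) determined by a sample point `ω`. -/
def hypergraphOf {n r : ℕ} (ω : {s : Finset (Fin n) // s.card = r} → Bool) :
    Finset (Finset (Fin n)) :=
  (Finset.univ.filter fun e => ω e = true).image Subtype.val


/-! The edges of `G_{n,p}^{(r)}` through a fixed vertex `v` form a star, and a star contains no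
linear cycle of length at least `4`: in a cycle the edges `e₀` and `e₂` are disjoint, yet both
would contain `v`. The size of the star is a sum of `N = C(n-1, r-1)` independent Bernoulli(`p`)
indicators, with mean `pN` and variance at most `pN`, so by Chebyshev it is at least `(1 - ε)pN`
except with probability at most `1 / (ε² pN)`, which tends to `0` because `pN ≍ p n^{r-1} → ∞`. -/

open scoped Finset

section BernoulliProduct

variable {q : ℝ}

lemma isProbabilityMeasure_bernoulliMeasure (h0 : 0 ≤ q) (h1 : q ≤ 1) :
    IsProbabilityMeasure (bernoulliMeasure q) := by
  constructor
  simp only [bernoulliMeasure, Measure.add_apply, Measure.smul_apply, measure_univ, smul_eq_mul,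
    mul_one]
  rw [← ENNReal.ofReal_add h0 (by linarith)]
  norm_num

lemma integral_bernoulliMeasure (h0 : 0 ≤ q) (h1 : q ≤ 1) (f : Bool → ℝ) :
    ∫ b, f b ∂bernoulliMeasure q = q * f true + (1 - q) * f false := by
  rw [integral_fintype .of_finite]
  simp [bernoulliMeasure, Measure.real, ENNReal.toReal_ofReal h0,
    ENNReal.toReal_ofReal (sub_nonneg.2 h1)]

variable {ι : Type*} [Fintype ι]

lemma integral_ite_eval_pi_bernoulliMeasure (h0 : 0 ≤ q) (h1 : q ≤ 1) (i : ι) :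
    ∫ ω, (if ω i then (1 : ℝ) else 0) ∂Measure.pi (fun _ : ι => bernoulliMeasure q) = q := by
  have := isProbabilityMeasure_bernoulliMeasure h0 h1
  rw [integral_comp_eval (μ := fun _ : ι => bernoulliMeasure q)
    (f := fun b : Bool => if b then (1 : ℝ) else 0) .of_discrete, integral_bernoulliMeasure h0 h1]
  simp

lemma variance_ite_eval_pi_bernoulliMeasure_le (h0 : 0 ≤ q) (h1 : q ≤ 1) (i : ι) :
    ProbabilityTheory.variance (fun ω => if ω i then (1 : ℝ) else 0)
      (Measure.pi fun _ : ι => bernoulliMeasure q) ≤ q := by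
  have := isProbabilityMeasure_bernoulliMeasure h0 h1
  calc _ ≤ _ := ProbabilityTheory.variance_le_expectation_sq .of_discrete
    _ = q := by
      simp only [Pi.pow_apply, ite_pow, one_pow, zero_pow two_ne_zero]
      exact integral_ite_eval_pi_bernoulliMeasure h0 h1 i

omit [Fintype ι] in
lemma card_filter_eq_sum_ite (T : Finset ι) (ω : ι → Bool) :
    (#{i ∈ T | ω i} : ℝ) = ∑ i ∈ T, if ω i then (1 : ℝ) else 0 := by
  rw [Finset.sum_boole]

variable (T : Finset ι)

lemma integral_card_filter_pi_bernoulliMeasure (h0 : 0 ≤ q) (h1 : q ≤ 1) :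
    ∫ ω, (#{i ∈ T | ω i} : ℝ) ∂Measure.pi (fun _ : ι => bernoulliMeasure q) = q * #T := by
  simp_rw [card_filter_eq_sum_ite]
  rw [integral_finsetSum _ fun i _ => .of_finite]
  simp [integral_ite_eval_pi_bernoulliMeasure h0 h1, mul_comm]

lemma variance_card_filter_pi_bernoulliMeasure_le (h0 : 0 ≤ q) (h1 : q ≤ 1) :
    ProbabilityTheory.variance (fun ω => (#{i ∈ T | ω i} : ℝ))
      (Measure.pi fun _ : ι => bernoulliMeasure q) ≤ q * #T := by
  have := isProbabilityMeasure_bernoulliMeasure h0 h1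
  have hindep := ProbabilityTheory.iIndepFun_pi (μ := fun _ : ι => bernoulliMeasure q)
    (X := fun _ (b : Bool) => if b then (1 : ℝ) else 0) fun _ => .of_discrete
  simp_rw [card_filter_eq_sum_ite]
  rw [← Finset.sum_fn, ProbabilityTheory.IndepFun.variance_sum (fun i _ => .of_discrete)
    fun i _ j _ hij => hindep.indepFun hij]
  calc _ ≤ ∑ _ ∈ T, q :=
        Finset.sum_le_sum fun i _ => variance_ite_eval_pi_bernoulliMeasure_le h0 h1 i
    _ = q * #T := by rw [Finset.sum_const, nsmul_eq_mul, mul_comm]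

lemma pi_bernoulliMeasure_le_abs_card_filter_sub (h0 : 0 ≤ q) (h1 : q ≤ 1) {c : ℝ} (hc : 0 < c) :
    Measure.pi (fun _ : ι => bernoulliMeasure q) {ω | c ≤ |(#{i ∈ T | ω i} : ℝ) - q * #T|}
      ≤ ENNReal.ofReal (q * #T / c ^ 2) := by
  have := isProbabilityMeasure_bernoulliMeasure h0 h1
  have hcheb := ProbabilityTheory.meas_ge_le_variance_div_sq
    (μ := Measure.pi fun _ : ι => bernoulliMeasure q) (X := fun ω => (#{i ∈ T | ω i} : ℝ))
    .of_discrete hc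
  rw [integral_card_filter_pi_bernoulliMeasure T h0 h1] at hcheb
  exact hcheb.trans <| ENNReal.ofReal_le_ofReal <|
    div_le_div_of_nonneg_right (variance_card_filter_pi_bernoulliMeasure_le T h0 h1) (by positivity)

end BernoulliProduct

lemma not_containsLinearCycle_of_forall_mem {α : Type*} [DecidableEq α] {r k : ℕ} (hk : 4 ≤ k)
    {v : α} {H : Finset (Finset α)} (hH : ∀ e ∈ H, v ∈ e) : ¬ ContainsLinearCycle r k H := by
  rintro ⟨E, hEH, e, -, rfl, -, -, hdisj⟩
  have hmem : ∀ i < k, v ∈ e i := fun i hi =>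
    hH _ (hEH (Finset.mem_image_of_mem e (Finset.mem_range.2 hi)))
  have h02 : Disjoint (e 0) (e 2) := hdisj 0 (by omega) 2 (by omega) (by omega)
    (by rw [Nat.mod_eq_of_lt (by omega)]; omega) (by rw [Nat.mod_eq_of_lt (by omega)]; omega)
  exact Finset.disjoint_left.1 h02 (hmem 0 (by omega)) (hmem 2 (by omega))

lemma card_filter_mem_subtype_card_eq {α : Type*} [Fintype α] [DecidableEq α] {r : ℕ}
    (hr : 1 ≤ r) (v : α) :
    #{s : {s : Finset α // s.card = r} | v ∈ s.1} = (Fintype.card α - 1).choose (r - 1) := by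
  rw [← Finset.card_univ, ← Finset.card_erase_of_mem (Finset.mem_univ v),
    ← Finset.card_powersetCard]
  refine Finset.card_bij' (fun s _ => s.1.erase v)
    (fun t ht => ⟨insert v t, ?_⟩) ?_ ?_ ?_ ?_
  · rw [Finset.mem_powersetCard] at ht
    rw [Finset.card_insert_of_notMem fun h => Finset.notMem_erase v _ (ht.1 h), ht.2]
    omega
  · intro s hs
    simp only [Finset.mem_filter] at hs
    simp [Finset.mem_powersetCard, Finset.erase_subset_erase, Finset.card_erase_of_mem hs.2, s.2]
  · intro t ht
    simp
  · intro s hs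
    simp only [Finset.mem_filter] at hs
    simp [Finset.insert_erase hs.2]
  · intro t ht
    rw [Finset.mem_powersetCard] at ht
    simp [Finset.erase_insert fun h => Finset.notMem_erase v _ (ht.1 h)]

lemma exists_subset_hypergraphOf_forall_mem {n r : ℕ}
    (ω : {s : Finset (Fin n) // s.card = r} → Bool) (v : Fin n) :
    ∃ H ⊆ hypergraphOf ω, (∀ e ∈ H, v ∈ e) ∧
      #H = #{s ∈ Finset.univ.filter (fun s : {s : Finset (Fin n) // s.card = r} => v ∈ s.1) |
        ω s} := by
  refine ⟨(Finset.univ.filter fun s : {s : Finset (Fin n) // s.card = r} => v ∈ s.1 ∧ ω s).image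
    Subtype.val, ?_, ?_, ?_⟩
  · exact Finset.image_subset_image (Finset.monotone_filter_right _ fun _ _ => And.right)
  · simp +contextual
  · rw [Finset.card_image_of_injective _ Subtype.val_injective, Finset.filter_filter]

lemma randomHypergraph_no_large_linearCycleFree_subgraph_le {k r n : ℕ} (hk : 4 ≤ k)
    (hr : 1 ≤ r) (hrn : r ≤ n) {q ε : ℝ} (hq0 : 0 < q) (hq1 : q ≤ 1) (hε : 0 < ε) :
    randomHypergraph n r q
      {ω | ∃ H ⊆ hypergraphOf ω, ¬ ContainsLinearCycle r k H ∧
        (1 - ε) * q * ((n - 1).choose (r - 1) : ℝ) ≤ (H.card : ℝ)}ᶜ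
      ≤ ENNReal.ofReal (ε ^ 2 * (q * (n - 1).choose (r - 1)))⁻¹ := by
  obtain ⟨v⟩ : Nonempty (Fin n) := ⟨⟨0, by omega⟩⟩
  set T := Finset.univ.filter (fun s : {s : Finset (Fin n) // s.card = r} => v ∈ s.1)
  have hT : #T = (n - 1).choose (r - 1) := by
    rw [card_filter_mem_subtype_card_eq hr, Fintype.card_fin]
  have hTpos : (0 : ℝ) < #T := by rw [hT]; exact_mod_cast Nat.choose_pos (by omega)
  have hsub : {ω | ∃ H ⊆ hypergraphOf ω, ¬ ContainsLinearCycle r k H ∧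
        (1 - ε) * q * ((n - 1).choose (r - 1) : ℝ) ≤ (H.card : ℝ)}ᶜ ⊆
      {ω | ε * (q * #T) ≤ |(#{s ∈ T | ω s} : ℝ) - q * #T|} := by
    intro ω hω
    obtain ⟨H, hHsub, hHv, hHcard⟩ := exists_subset_hypergraphOf_forall_mem ω v
    by_contra hdev
    refine hω ⟨H, hHsub, not_containsLinearCycle_of_forall_mem hk hHv, ?_⟩
    simp only [Set.mem_ofPred_eq, not_le, abs_lt] at hdev
    rw [hHcard, ← hT]
    linarith [hdev.1]
  calc _ ≤ _ := measure_mono hsub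
    _ ≤ ENNReal.ofReal (q * #T / (ε * (q * #T)) ^ 2) :=
        pi_bernoulliMeasure_le_abs_card_filter_sub T hq0.le hq1 (by positivity)
    _ = _ := by
        rw [← hT]
        congr 1
        field_simp

lemma pow_le_two_pow_mul_factorial_mul_choose {k n : ℕ} (hkn : 2 * k ≤ n) :
    (n : ℝ) ^ k ≤ 2 ^ k * k.factorial * (n - 1).choose k := by
  have hchoose := Nat.pow_le_choose (α := ℝ) k (n - 1)
  rw [div_le_iff₀ (by positivity)] at hchoose
  have hhalf : (n : ℝ) ≤ 2 * ((n - 1 + 1 - k : ℕ) : ℝ) := by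
    exact_mod_cast (by omega : n ≤ 2 * (n - 1 + 1 - k))
  calc (n : ℝ) ^ k ≤ (2 * ((n - 1 + 1 - k : ℕ) : ℝ)) ^ k := by gcongr
    _ = 2 ^ k * ((n - 1 + 1 - k : ℕ) : ℝ) ^ k := mul_pow _ _ _
    _ ≤ 2 ^ k * ((n - 1).choose k * k.factorial) := by gcongr
    _ = _ := by ring

lemma tendsto_mul_choose_atTop {p : ℕ → ℝ} (hp : ∀ n, 0 ≤ p n) {k : ℕ}
    (h : Tendsto (fun n : ℕ => p n * (n : ℝ) ^ k) atTop atTop) :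
    Tendsto (fun n : ℕ => p n * (n - 1).choose k) atTop atTop := by
  have hC : (0 : ℝ) < 2 ^ k * k.factorial := by positivity
  refine tendsto_atTop_mono' atTop ?_ (h.atTop_div_const hC)
  filter_upwards [eventually_ge_atTop (2 * k)] with n hn
  rw [div_le_iff₀ hC, mul_assoc]
  gcongr
  · exact hp n
  · linarith [pow_le_two_pow_mul_factorial_mul_choose hn]

lemma tendsto_measure_of_tendsto_measure_compl {ι : Type*} {l : Filter ι} {Ω : ι → Type*}
    [∀ i, MeasurableSpace (Ω i)] {μ : ∀ i, Measure (Ω i)} [∀ i, IsProbabilityMeasure (μ i)]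
    {s : ∀ i, Set (Ω i)} (hs : ∀ i, MeasurableSet (s i))
    (h : Tendsto (fun i => μ i (s i)ᶜ) l (nhds 0)) : Tendsto (fun i => μ i (s i)) l (nhds 1) := by
  have h1 := ENNReal.Tendsto.sub tendsto_const_nhds h (Or.inl ENNReal.one_ne_top)
  rw [tsub_zero] at h1
  refine h1.congr fun i => ?_
  rw [prob_compl_eq_one_sub (hs i), ENNReal.sub_sub_cancel ENNReal.one_ne_top prob_le_one]

theorem statement7 (l r : ℕ) (hl : 2 ≤ l) (hr : 3 ≤ r)
    (p : ℕ → ℝ) (hp : ∀ n, 0 < p n ∧ p n ≤ 1)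
    (hgrow : Tendsto (fun n : ℕ => p n * (n : ℝ) ^ (r - 1)) atTop atTop)
    (ε : ℝ) (hε : 0 < ε) :
    Tendsto
      (fun n : ℕ => randomHypergraph n r (p n)
        {ω | ∃ H ⊆ hypergraphOf ω, ¬ ContainsLinearCycle r (2 * l) H ∧
              (1 - ε) * p n * ((n - 1).choose (r - 1) : ℝ) ≤ (H.card : ℝ)})
      atTop (nhds 1) := by
  have : ∀ n, IsProbabilityMeasure (randomHypergraph n r (p n)) := fun n =>
    have := isProbabilityMeasure_bernoulliMeasure (hp n).1.le (hp n).2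
    inferInstanceAs (IsProbabilityMeasure (Measure.pi _))
  refine tendsto_measure_of_tendsto_measure_compl (fun n => (Set.toFinite _).measurableSet) ?_
  have hbound : Tendsto (fun n => ENNReal.ofReal (ε ^ 2 * (p n * (n - 1).choose (r - 1)))⁻¹)
      atTop (nhds 0) := by
    simpa using ENNReal.tendsto_ofReal
      ((tendsto_mul_choose_atTop (fun n => (hp n).1.le) hgrow).const_mul_atTop
        (by positivity : 0 < ε ^ 2)).inv_tendsto_atTop
  refine tendsto_of_tendsto_of_tendsto_of_le_of_le' tendsto_const_nhds hbound
    (.of_forall fun _ => zero_le) ?_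
  filter_upwards [eventually_ge_atTop r] with n hn
  exact randomHypergraph_no_large_linearCycleFree_subgraph_le (by omega) (by omega) hn
    (hp n).1 (hp n).2 hε
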